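/- arXiv:1505.04810 — 5 statements merged into one kernel-verified Lean document; each statement's English description precedes it below -/
import Mathlib

section
/- Let a, b, z > 0 and c < 0 with c ≠ −1, and assume (1+c)z/a + b > 0. Define Z(t) = −(a/(1+c))·(b + ct) + (z + ab/(1+c))·(b/(b+ct))^{1/c} and τ^z = ((1+c)z/a + b)^{c/(c+1)} · b^{1/(c+1)} · c^{−1} − b/c. Then 0 < τ^z < −b/c, Z(τ^z) = 0, and Z(t) > 0 for all t ∈ [0, τ^z). In particular, τ^z is the smallest positive zero of Z, and the order position hits zero strictly before the bid-queue depletion time τ^b = −b/c. -/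
open Real

/-!
With `s = b + c t` and `p = (c + 1) / c`, the closed form factors as
`Z = a / (-c) · s ^ (-1/c) · (s ^ p - K ^ p) / p`, where `K ^ p = ((1 + c) z / a + b) b ^ (1/c)`.
Whatever the sign of `p`, `(s ^ p - K ^ p) / p` is positive exactly when `s > K`, so `Z` vanishes
when `b + c t` reaches `K` and is positive before. The formula for `τᶻ` says `b + c τᶻ = K`, and
`0 < K < b` places `τᶻ` in `(0, -b/c)`.
-/

theorem rpow_sub_rpow_div_pos_iff {x y p : ℝ} (hx : 0 < x) (hy : 0 < y) (hp : p ≠ 0) :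
    0 < (y ^ p - x ^ p) / p ↔ x < y := by
  rcases hp.lt_or_gt with hp | hp
  · rw [← neg_div_neg_eq, neg_sub, div_pos_iff_of_pos_right (neg_pos.2 hp), sub_pos,
      rpow_lt_rpow_iff_of_neg hy hx hp]
  · rw [div_pos_iff_of_pos_right hp, sub_pos, rpow_lt_rpow_iff hx.le hy.le hp]

theorem mul_rpow_rpow_inv {x y q : ℝ} (r : ℝ) (hx : 0 ≤ x) (hy : 0 ≤ y) (hq : q ≠ 0) :
    (x ^ q * y ^ r) ^ q⁻¹ = x * y ^ (r / q) := by
  rw [mul_rpow (rpow_nonneg hx q) (rpow_nonneg hy r), rpow_rpow_inv hx hq, ← rpow_mul hy,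
    div_eq_mul_inv]

/-- The level `b + c τᶻ` of the rescaled bid queue at the execution time. -/
noncomputable def executionLevel (a b z c : ℝ) : ℝ :=
  ((1 + c) * z / a + b) ^ (c / (c + 1)) * b ^ (1 / (c + 1))

section ExecutionLevel

variable {a b z c : ℝ}

theorem executionLevel_pos (hb : 0 < b) (hP : 0 < (1 + c) * z / a + b) :
    0 < executionLevel a b z c := by
  unfold executionLevel
  positivity

theorem executionLevel_rpow (hb : 0 < b) (hc : c ≠ 0) (hc1 : c + 1 ≠ 0)
    (hP : 0 < (1 + c) * z / a + b) :
    executionLevel a b z c ^ ((c + 1) / c) = ((1 + c) * z / a + b) * b ^ (1 / c) := by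
  rw [executionLevel, ← inv_div c, mul_rpow_rpow_inv _ hP.le hb.le (div_ne_zero hc hc1)]
  congr 2
  field_simp

theorem executionLevel_lt (ha : 0 < a) (hb : 0 < b) (hz : 0 < z) (hc : c < 0) (hc1 : c + 1 ≠ 0)
    (hP : 0 < (1 + c) * z / a + b) :
    executionLevel a b z c < b := by
  have hc1' : 1 + c ≠ 0 := by rwa [add_comm]
  have hp : (c + 1) / c ≠ 0 := div_ne_zero hc1 hc.ne
  have hbp : b ^ ((c + 1) / c) = b * b ^ (1 / c) := by
    rw [← rpow_one_add' hb.le (by simpa [add_div, hc.ne] using hp), add_div, div_self hc.ne]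
  rw [← rpow_sub_rpow_div_pos_iff (executionLevel_pos hb hP) hb hp, hbp,
    executionLevel_rpow hb hc.ne hc1 hP,
    show (b * b ^ (1 / c) - ((1 + c) * z / a + b) * b ^ (1 / c)) / ((c + 1) / c)
      = b ^ (1 / c) * (-c * z / a) by field_simp; ring]
  have : 0 < -c * z / a := div_pos (mul_pos (neg_pos.2 hc) hz) ha
  positivity

theorem fluidPosition_eq_executionLevel (ha : a ≠ 0) (hb : 0 < b) (hc : c ≠ 0)
    (hc1 : c + 1 ≠ 0) (hP : 0 < (1 + c) * z / a + b) {s : ℝ} (hs : 0 < s) :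
    -(a / (1 + c)) * s + (z + a * b / (1 + c)) * (b / s) ^ (1 / c)
      = a / -c * s ^ (-(1 / c)) *
        ((s ^ ((c + 1) / c) - executionLevel a b z c ^ ((c + 1) / c)) / ((c + 1) / c)) := by
  have hc1' : 1 + c ≠ 0 := by rwa [add_comm]
  have hs_split : s = s ^ ((c + 1) / c) * s ^ (-(1 / c)) := by
    rw [← rpow_add hs, show (c + 1) / c + -(1 / c) = 1 by field_simp; ring, rpow_one]
  have hcoef : (z + a * b / (1 + c)) * b ^ (1 / c)
      = a / (1 + c) * executionLevel a b z c ^ ((c + 1) / c) := by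
    rw [executionLevel_rpow hb hc hc1 hP]
    field_simp
  rw [div_rpow hb.le hs.le, div_eq_mul_inv (b ^ _), ← rpow_neg hs.le, ← mul_assoc, hcoef]
  nth_rewrite 1 [hs_split]
  field_simp
  ring

end ExecutionLevel

/-- Execution time of the order position in the fluid limit, case `c < 0`, `c ≠ -1`:
`τᶻ = ((1+c)z/a + b)^(c/(c+1)) b^(1/(c+1)) c⁻¹ - b/c` satisfies `0 < τᶻ < -b/c`,
`Z τᶻ = 0`, and `Z t > 0` on `[0, τᶻ)`; in particular the order position hits zero
strictly before the bid-queue depletion time `τᵇ = -b/c`. -/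
theorem execution_time_general_case
    (a b z c : ℝ) (ha : 0 < a) (hb : 0 < b) (hz : 0 < z)
    (hc : c < 0) (hc1 : c ≠ -1) (hpos : 0 < (1 + c) * z / a + b)
    (Z : ℝ → ℝ)
    (hZ : ∀ t, Z t = -(a / (1 + c)) * (b + c * t)
        + (z + a * b / (1 + c)) * (b / (b + c * t)) ^ (1 / c))
    (τz : ℝ)
    (hτz : τz = ((1 + c) * z / a + b) ^ (c / (c + 1)) * b ^ (1 / (c + 1)) * c⁻¹ - b / c) :
    0 < τz ∧ τz < -b / c ∧ Z τz = 0 ∧ ∀ t, 0 ≤ t → t < τz → 0 < Z t := by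
  have hc0 : c ≠ 0 := hc.ne
  have hc1' : c + 1 ≠ 0 := fun h => hc1 (by linarith)
  set K := executionLevel a b z c
  have hK : 0 < K := executionLevel_pos hb hpos
  have hKb : K < b := executionLevel_lt ha hb hz hc hc1' hpos
  have hτK : b + c * τz = K := by
    rw [show τz = K * c⁻¹ - b / c from hτz]
    field_simp
    ring
  have hZK : ∀ t, K ≤ b + c * t → Z t = a / -c * (b + c * t) ^ (-(1 / c)) *
      (((b + c * t) ^ ((c + 1) / c) - K ^ ((c + 1) / c)) / ((c + 1) / c)) := fun t ht =>
    (hZ t).trans (fluidPosition_eq_executionLevel ha.ne' hb hc0 hc1' hpos (hK.trans_le ht))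
  refine ⟨pos_of_mul_neg_right (by linarith) hc.le, ?_, ?_, fun t _ htτ => ?_⟩
  · rw [lt_div_iff_of_neg hc]
    linarith
  · rw [hZK τz hτK.ge, hτK, sub_self, zero_div, mul_zero]
  · have hKt : K < b + c * t := by linarith [mul_lt_mul_of_neg_left htτ hc]
    rw [hZK t hKt.le]
    exact mul_pos (mul_pos (div_pos ha (neg_pos.2 hc)) (rpow_pos_of_pos (hK.trans hKt) _))
      ((rpow_sub_rpow_div_pos_iff hK (hK.trans hKt) (div_ne_zero hc1' hc0)).2 hKt)
end

section
/- Let a, b, z > 0. Define Z(t) = (a·log(b − t) + z/b − a·log b)·(b − t) for t ∈ [0, b), and τ^z = b·(1 − e^{−z/(ab)}). Then 0 < τ^z < b, Z(τ^z) = 0, and Z(t) > 0 for all t ∈ [0, τ^z). In particular, τ^z is the smallest positive zero of Z and the order position hits zero strictly before the bid-queue depletion time τ^b = b. -/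
open Real

/-- Execution time of the order position in the fluid limit, case `c = -1`:
`τᶻ = b(1 - e^(-z/(ab)))` satisfies `0 < τᶻ < b`, `Z τᶻ = 0`, and `Z t > 0` on
`[0, τᶻ)`; in particular the order position hits zero strictly before the
bid-queue depletion time `τᵇ = b`. -/
theorem execution_time_c_neg_one
    (a b z : ℝ) (ha : 0 < a) (hb : 0 < b) (hz : 0 < z)
    (Z : ℝ → ℝ)
    (hZ : ∀ t, Z t = (a * Real.log (b - t) + z / b - a * Real.log b) * (b - t))
    (τz : ℝ) (hτz : τz = b * (1 - Real.exp (-z / (a * b)))) :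
    0 < τz ∧ τz < b ∧ Z τz = 0 ∧ ∀ t, 0 ≤ t → t < τz → 0 < Z t := by
  set E := Real.exp (-z / (a * b)) with hE
  have hE0 : 0 < E := Real.exp_pos _
  have hE1 : E < 1 := by
    rw [hE, Real.exp_lt_one_iff, neg_div]
    have : 0 < z / (a * b) := div_pos hz (mul_pos ha hb)
    linarith
  have hτ0 : 0 < τz := by
    rw [hτz]; exact mul_pos hb (by linarith)
  have hτb : τz < b := by
    rw [hτz]; nlinarith
  have hbt : b - τz = b * E := by rw [hτz]; ring
  have hbE : 0 < b * E := mul_pos hb hE0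
  have hlog : Real.log (b - τz) = Real.log b + (-z / (a * b)) := by
    rw [hbt, Real.log_mul (ne_of_gt hb) (ne_of_gt hE0), hE, Real.log_exp]
  have hfac : a * Real.log (b - τz) + z / b - a * Real.log b = 0 := by
    rw [hlog]; field_simp; ring
  refine ⟨hτ0, hτb, by rw [hZ, hfac, zero_mul], ?_⟩
  intro t ht0 htτ
  have hbt' : b * E < b - t := by
    rw [← hbt]; linarith
  have hlogmono : Real.log (b - τz) < Real.log (b - t) := by
    rw [hbt]; exact Real.log_lt_log hbE hbt'
  have hpos : 0 < a * Real.log (b - t) + z / b - a * Real.log b := by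
    nlinarith [hfac, mul_lt_mul_of_pos_left hlogmono ha]
  rw [hZ]
  exact mul_pos hpos (by linarith)
end

section
/- Let α > 0, r₀ > 0, and θ₀ ∈ (0, α). Then ∫₀^∞ (r/r₀)^{(π/α) − 1} · sin(πθ₀/α) / (sin²(πθ₀/α) + ((r/r₀)^{π/α} + cos(πθ₀/α))²) · (1/(α r₀)) dr = θ₀/α, where the integral converges as a Lebesgue integral on (0, ∞). -/
/-!
The integrand is the derivative of `r ↦ arctan (((r / r₀) ^ (π / α) + cos x) / sin x) / π`
with `x = π θ₀ / α ∈ (0, π)`, and it is nonnegative. The integral is therefore the increment of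
this antiderivative between `r = 0`, where `arctan (cos x / sin x) = π / 2 - x`, and `r = ∞`,
where the arctangent tends to `π / 2`.
-/

open Real MeasureTheory Filter Set

section ArctanRpowAntiderivative

variable {p r₀ s : ℝ} (c : ℝ)

theorem hasDerivAt_arctan_div_rpow_add (hp : p ≠ 0) (hr₀ : r₀ ≠ 0) (hs : s ≠ 0) {r : ℝ}
    (hr : r ≠ 0) :
    HasDerivAt (fun t => r₀ / p * arctan (((t / r₀) ^ p + c) / s))
      ((r / r₀) ^ (p - 1) * s / (s ^ 2 + ((r / r₀) ^ p + c) ^ 2)) r := by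
  have hdiv : HasDerivAt (fun t : ℝ => t / r₀) (1 / r₀) r := by
    simpa using (hasDerivAt_id r).div_const r₀
  have hpow := (hasDerivAt_rpow_const (p := p) (Or.inl (div_ne_zero hr hr₀))).comp r hdiv
  have harg := (hpow.add_const c).div_const s
  refine ((hasDerivAt_arctan _).comp r harg |>.const_mul (r₀ / p)).congr_deriv ?_
  have hden : s ^ 2 + ((r / r₀) ^ p + c) ^ 2 ≠ 0 := by positivity
  field_simp
  simp only [Function.comp_apply]
  ring

theorem rpow_sub_one_mul_div_sq_add_sq_nonneg (hs : 0 ≤ s) {r : ℝ} (hr : 0 ≤ r)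
    (hr₀ : 0 ≤ r₀) :
    0 ≤ (r / r₀) ^ (p - 1) * s / (s ^ 2 + ((r / r₀) ^ p + c) ^ 2) := by
  have := rpow_nonneg (div_nonneg hr hr₀) (p - 1)
  positivity

theorem tendsto_arctan_div_rpow_add_atTop (hp : 0 < p) (hr₀ : 0 < r₀) (hs : 0 < s) :
    Tendsto (fun t => arctan (((t / r₀) ^ p + c) / s)) atTop (nhds (π / 2)) := by
  have hpow : Tendsto (fun t : ℝ => (t / r₀) ^ p) atTop atTop :=
    (tendsto_rpow_atTop hp).comp (tendsto_id.atTop_div_const hr₀)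
  exact (tendsto_arctan_atTop.mono_right nhdsWithin_le_nhds).comp
    ((tendsto_atTop_add_const_right _ c hpow).atTop_div_const hs)

theorem integrableOn_and_integral_Ioi_rpow_sub_one_mul_div_sq_add_sq (hp : 0 < p)
    (hr₀ : 0 < r₀) (hs : 0 < s) :
    IntegrableOn (fun r => (r / r₀) ^ (p - 1) * s / (s ^ 2 + ((r / r₀) ^ p + c) ^ 2))
        (Ioi 0) ∧
      ∫ r in Ioi (0 : ℝ), (r / r₀) ^ (p - 1) * s / (s ^ 2 + ((r / r₀) ^ p + c) ^ 2) =
        r₀ / p * (π / 2 - arctan (c / s)) := by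
  have hcont : ContinuousWithinAt (fun t => r₀ / p * arctan (((t / r₀) ^ p + c) / s))
      (Ici 0) 0 := by
    refine ContinuousAt.continuousWithinAt ?_
    have hpow : ContinuousAt (fun t : ℝ => (t / r₀) ^ p) 0 :=
      (continuousAt_id.div_const r₀).rpow_const (Or.inr hp.le)
    exact (continuous_arctan.continuousAt.comp ((hpow.add_const c).div_const s)).const_mul _
  have hderiv (r : ℝ) (hr : r ∈ Ioi 0) := hasDerivAt_arctan_div_rpow_add c hp.ne' hr₀.ne' hs.ne'
    (ne_of_gt hr)
  have hnonneg (r : ℝ) (hr : r ∈ Ioi 0) :=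
    rpow_sub_one_mul_div_sq_add_sq_nonneg (p := p) c hs.le (le_of_lt hr) hr₀.le
  have htop := (tendsto_arctan_div_rpow_add_atTop c hp hr₀ hs).const_mul (r₀ / p)
  refine ⟨integrableOn_Ioi_deriv_of_nonneg hcont hderiv hnonneg htop, ?_⟩
  rw [integral_Ioi_of_hasDerivAt_of_nonneg hcont hderiv hnonneg htop, zero_div,
    zero_rpow hp.ne', zero_add]
  ring

end ArctanRpowAntiderivative

theorem arctan_cos_div_sin {x : ℝ} (hx₀ : 0 < x) (hxπ : x < π) :
    arctan (cos x / sin x) = π / 2 - x := by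
  rw [← inv_div, ← tan_eq_sin_div_cos, ← tan_pi_div_two_sub, arctan_tan] <;> linarith

/-- The probability of a price decrease for a driftless correlated planar Brownian
motion, written as an exit-side density integral over a wedge of opening angle `α`
with initial polar coordinates `(r₀, θ₀)`, converges and equals `θ₀/α`. -/
theorem integral_price_decrease_probability
    (α r₀ θ₀ : ℝ) (hα : 0 < α) (hr₀ : 0 < r₀) (hθ₀ : 0 < θ₀) (hθ₀α : θ₀ < α) :
    IntegrableOn
      (fun r : ℝ => (r / r₀) ^ (Real.pi / α - 1) * Real.sin (Real.pi * θ₀ / α) /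
        ((Real.sin (Real.pi * θ₀ / α)) ^ 2 +
          ((r / r₀) ^ (Real.pi / α) + Real.cos (Real.pi * θ₀ / α)) ^ 2) *
        (1 / (α * r₀)))
      (Set.Ioi 0) volume ∧
    ∫ r in Set.Ioi (0 : ℝ),
      (r / r₀) ^ (Real.pi / α - 1) * Real.sin (Real.pi * θ₀ / α) /
        ((Real.sin (Real.pi * θ₀ / α)) ^ 2 +
          ((r / r₀) ^ (Real.pi / α) + Real.cos (Real.pi * θ₀ / α)) ^ 2) *
        (1 / (α * r₀)) = θ₀ / α := by
  have hx₀ : 0 < π * θ₀ / α := by positivity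
  have hxπ : π * θ₀ / α < π := by
    rw [div_lt_iff₀ hα]
    exact mul_lt_mul_of_pos_left hθ₀α pi_pos
  obtain ⟨hint, heq⟩ := integrableOn_and_integral_Ioi_rpow_sub_one_mul_div_sq_add_sq
    (cos (π * θ₀ / α)) (div_pos pi_pos hα) hr₀ (sin_pos_of_pos_of_lt_pi hx₀ hxπ)
  refine ⟨hint.mul_const _, ?_⟩
  rw [integral_mul_const, heq, arctan_cos_div_sin hx₀ hxπ]
  field_simp
  ring
end

section
/- Let λ, α, β, v^b, v^a, q^b, q^a be real numbers with βv^b + αv^a ≠ 0. Define Q^b(t) = −(α q^a v^b − α q^b v^a + λ v^b)/(α v^a + β v^b) + (v^b (β q^b + α q^a + λ)/(β v^b + α v^a))·e^{−(v^bβ + v^aα)t} and Q^a(t) = −(β q^b v^a − β q^a v^b + λ v^a)/(α v^a + β v^b) + (v^a (β q^b + α q^a + λ)/(β v^b + α v^a))·e^{−(v^bβ + v^aα)t}. Then Q^b(0) = q^b, Q^a(0) = q^a, and for all t ∈ ℝ, (Q^b)′(t) = −(λ + β Q^b(t) + α Q^a(t))·v^b and (Q^a)′(t) = −(λ + β Q^b(t)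 + α Q^a(t))·v^a. -/
/-!
Write `s = β vᵇ + α vᵃ` and `K = β qᵇ + α qᵃ + λ`. The two constant terms are chosen so that
`λ + β Qᵇ + α Qᵃ` collapses to `K e^{-s t}`, and each queue is a constant plus a multiple
`v K / s` of `e^{-s t}`, whose derivative is `-v K e^{-s t}`.
-/

open Real

theorem hasDerivAt_const_add_mul_exp (c a k t : ℝ) :
    HasDerivAt (fun t => c + a * exp (k * t)) (a * (exp (k * t) * k)) t := by
  simpa using (((hasDerivAt_id t).const_mul k).exp.const_mul a).const_add c

theorem hasDerivAt_const_add_div_mul_exp {s : ℝ} (hs : s ≠ 0) (c v K : ℝ) {Q : ℝ → ℝ}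
    (hQ : ∀ t, Q t = c + v * K / s * exp (-s * t)) (t : ℝ) :
    HasDerivAt Q (-(K * exp (-s * t)) * v) t := by
  rw [funext hQ]
  convert hasDerivAt_const_add_mul_exp c (v * K / s) (-s) t using 1
  field_simp

/-- Explicit solution of the coupled linear fluid-limit ODE system for the best bid
and ask queues under queue-length-dependent arrival intensity: the stated functions
satisfy `Qᵇ(0) = qᵇ`, `Qᵃ(0) = qᵃ`, and
`(Qᵇ)'(t) = -(λ + βQᵇ(t) + αQᵃ(t))vᵇ`, `(Qᵃ)'(t) = -(λ + βQᵇ(t) + αQᵃ(t))vᵃ`. -/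
theorem linear_intensity_fluid_limit_ode
    (lam α β vb va qb qa : ℝ) (h : β * vb + α * va ≠ 0)
    (Qb Qa : ℝ → ℝ)
    (hQb : ∀ t, Qb t = -(α * qa * vb - α * qb * va + lam * vb) / (α * va + β * vb)
        + (vb * (β * qb + α * qa + lam) / (β * vb + α * va)) *
          Real.exp (-(vb * β + va * α) * t))
    (hQa : ∀ t, Qa t = -(β * qb * va - β * qa * vb + lam * va) / (α * va + β * vb)
        + (va * (β * qb + α * qa + lam) / (β * vb + α * va)) *
          Real.exp (-(vb * β + va * α) * t)) :
    Qb 0 = qb ∧ Qa 0 = qa ∧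
    (∀ t, HasDerivAt Qb (-(lam + β * Qb t + α * Qa t) * vb) t) ∧
    (∀ t, HasDerivAt Qa (-(lam + β * Qb t + α * Qa t) * va) t) := by
  simp only [show vb * β + va * α = β * vb + α * va by ring,
    show α * va + β * vb = β * vb + α * va by ring] at hQb hQa
  have intensity : ∀ t, lam + β * Qb t + α * Qa t =
      (β * qb + α * qa + lam) * exp (-(β * vb + α * va) * t) := by
    intro t
    rw [hQb, hQa]
    field_simp
    ring
  refine ⟨?_, ?_, fun t => ?_, fun t => ?_⟩
  · rw [hQb, mul_zero, exp_zero, mul_one, ← add_div, div_eq_iff h]; ring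
  · rw [hQa, mul_zero, exp_zero, mul_one, ← add_div, div_eq_iff h]; ring
  · rw [intensity]; exact hasDerivAt_const_add_div_mul_exp h _ _ _ hQb t
  · rw [intensity]; exact hasDerivAt_const_add_div_mul_exp h _ _ _ hQa t
end

section
/- Let λ, α, β, v^b, v^a, q^b, q^a be strictly positive real numbers satisfying −λv^b/α < q^a v^b − q^b v^a < λ v^a/β. Define Q^b and Q^a as follows: Q^b(t) = −(α q^a v^b − α q^b v^a + λ v^b)/(α v^a + β v^b) + (v^b (β q^b + α q^a + λ)/(β v^b + α v^a))·e^{−(v^bβ + v^aα)t}, and Q^a(t) = −(β q^b v^a − β q^a v^b + λ v^a)/(α v^a + β v^b) + (v^a (β q^b + α q^a + λ)/(β v^b + α v^a))·e^{−(v^bβ + v^aα)t}. Then the numbers τ^b = −(1/(v^bβ + v^aα))·log( (v^bλ + q^a v^bα − q^b v^aα)/(v^bβ q^b + v^bα q^a + λ v^b) ) and τ^a = −(1/(v^bβ + v^aα))·log( (−q^a v^bβ + q^b v^aβ + λ v^a)/(β q^b v^a + α q^a v^a + λ v^a) ) are well defined (the arguments of the logarithms lie in (0,1)), strictly positive, and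 satisfy Q^b(τ^b) = 0 and Q^a(τ^a) = 0. -/
open Real

/-!
Both fluid queues have the form `Q(t) = (D e^{-kt} - N) / k` with `k = vᵇβ + vᵃα > 0`, so `Q`
vanishes exactly when `e^{-kt} = N / D`, i.e. at `t = -(1/k) log (N / D)`. The balance conditions
say `N > 0`, and `D - N` equals `k qᵇ` (bid) resp. `k qᵃ` (ask), so `N / D ∈ (0, 1)` and the
depletion time is positive.
-/

noncomputable def depletionTime (k r : ℝ) : ℝ := -(1 / k) * log r

lemma exp_neg_mul_depletionTime {k r : ℝ} (hk : k ≠ 0) (hr : 0 < r) :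
    exp (-k * depletionTime k r) = r := by
  rw [depletionTime, show -k * (-(1 / k) * log r) = log r by field_simp, exp_log hr]

lemma depletionTime_pos {k r : ℝ} (hk : 0 < k) (hr₀ : 0 < r) (hr₁ : r < 1) :
    0 < depletionTime k r :=
  mul_pos_of_neg_of_neg (neg_neg_of_pos (one_div_pos.mpr hk)) (log_neg hr₀ hr₁)

lemma div_mem_Ioo_and_depletionTime_pos {k N D : ℝ} (hk : 0 < k) (hN : 0 < N) (hND : N < D) :
    (0 < N / D ∧ N / D < 1) ∧ 0 < depletionTime k (N / D) := by
  have hr₀ : 0 < N / D := div_pos hN (hN.trans hND)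
  have hr₁ : N / D < 1 := (div_lt_one (hN.trans hND)).mpr hND
  exact ⟨⟨hr₀, hr₁⟩, depletionTime_pos hk hr₀ hr₁⟩

lemma neg_div_add_div_mul_exp_depletionTime {k N D : ℝ} (hk : k ≠ 0) (hN : 0 < N) (hD : 0 < D) :
    -N / k + D / k * exp (-k * depletionTime k (N / D)) = 0 := by
  rw [exp_neg_mul_depletionTime hk (div_pos hN hD)]
  field_simp
  ring

theorem linear_intensity_depletion_times_general
    (lam α β vb va qb qa : ℝ)
    (hα : 0 < α) (hβ : 0 < β) (hvb : 0 < vb) (hva : 0 < va)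
    (hqb : 0 < qb) (hqa : 0 < qa)
    (hcond1 : -(lam * vb) / α < qa * vb - qb * va)
    (hcond2 : qa * vb - qb * va < lam * va / β)
    (Qb Qa : ℝ → ℝ)
    (hQb : ∀ t, Qb t = -(α * qa * vb - α * qb * va + lam * vb) / (α * va + β * vb)
        + (vb * (β * qb + α * qa + lam) / (β * vb + α * va)) *
          Real.exp (-(vb * β + va * α) * t))
    (hQa : ∀ t, Qa t = -(β * qb * va - β * qa * vb + lam * va) / (α * va + β * vb)
        + (va * (β * qb + α * qa + lam) / (β * vb + α * va)) *
          Real.exp (-(vb * β + va * α) * t))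
    (τb τa : ℝ)
    (hτb : τb = -(1 / (vb * β + va * α)) *
        Real.log ((vb * lam + qa * vb * α - qb * va * α) /
          (vb * β * qb + vb * α * qa + lam * vb)))
    (hτa : τa = -(1 / (vb * β + va * α)) *
        Real.log ((-(qa * vb * β) + qb * va * β + lam * va) /
          (β * qb * va + α * qa * va + lam * va))) :
    (0 < (vb * lam + qa * vb * α - qb * va * α) / (vb * β * qb + vb * α * qa + lam * vb) ∧
      (vb * lam + qa * vb * α - qb * va * α) / (vb * β * qb + vb * α * qa + lam * vb) < 1) ∧
    (0 < (-(qa * vb * β) + qb * va * β + lam * va) / (β * qb * va + α * qa * va + lam * va) ∧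
      (-(qa * vb * β) + qb * va * β + lam * va) / (β * qb * va + α * qa * va + lam * va) < 1) ∧
    0 < τb ∧ 0 < τa ∧ Qb τb = 0 ∧ Qa τa = 0 := by
  have hk : 0 < vb * β + va * α := by positivity
  have hNb : 0 < vb * lam + qa * vb * α - qb * va * α := by
    linarith [(div_lt_iff₀ hα).mp hcond1]
  have hNa : 0 < -(qa * vb * β) + qb * va * β + lam * va := by
    linarith [(lt_div_iff₀ hβ).mp hcond2]
  have hNDb : vb * lam + qa * vb * α - qb * va * α < vb * β * qb + vb * α * qa + lam * vb := by
    linarith [mul_pos hk hqb]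
  have hNDa :
      -(qa * vb * β) + qb * va * β + lam * va < β * qb * va + α * qa * va + lam * va := by
    linarith [mul_pos hk hqa]
  obtain ⟨hrb, hτb_pos⟩ := div_mem_Ioo_and_depletionTime_pos hk hNb hNDb
  obtain ⟨hra, hτa_pos⟩ := div_mem_Ioo_and_depletionTime_pos hk hNa hNDa
  rw [← depletionTime] at hτb hτa
  subst hτb hτa
  refine ⟨hrb, hra, hτb_pos, hτa_pos, ?_, ?_⟩
  · convert neg_div_add_div_mul_exp_depletionTime hk.ne' hNb (hNb.trans hNDb) using 1
    rw [hQb]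
    ring
  · convert neg_div_add_div_mul_exp_depletionTime hk.ne' hNa (hNa.trans hNDa) using 1
    rw [hQa]
    ring

/-- Depletion times of the fluid limits of the best bid and ask queues under
queue-length-dependent arrival intensity: under the stated positivity and balance
conditions, the arguments of the logarithms defining `τᵇ` and `τᵃ` lie in `(0,1)`,
`τᵇ, τᵃ > 0`, and `Qᵇ(τᵇ) = 0`, `Qᵃ(τᵃ) = 0`. -/
theorem linear_intensity_depletion_times
    (lam α β vb va qb qa : ℝ)
    (hlam : 0 < lam) (hα : 0 < α) (hβ : 0 < β) (hvb : 0 < vb) (hva : 0 < va)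
    (hqb : 0 < qb) (hqa : 0 < qa)
    (hcond1 : -(lam * vb) / α < qa * vb - qb * va)
    (hcond2 : qa * vb - qb * va < lam * va / β)
    (Qb Qa : ℝ → ℝ)
    (hQb : ∀ t, Qb t = -(α * qa * vb - α * qb * va + lam * vb) / (α * va + β * vb)
        + (vb * (β * qb + α * qa + lam) / (β * vb + α * va)) *
          Real.exp (-(vb * β + va * α) * t))
    (hQa : ∀ t, Qa t = -(β * qb * va - β * qa * vb + lam * va) / (α * va + β * vb)
        + (va * (β * qb + α * qa + lam) / (β * vb + α * va)) *
          Real.exp (-(vb * β + va * α) * t))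
    (τb τa : ℝ)
    (hτb : τb = -(1 / (vb * β + va * α)) *
        Real.log ((vb * lam + qa * vb * α - qb * va * α) /
          (vb * β * qb + vb * α * qa + lam * vb)))
    (hτa : τa = -(1 / (vb * β + va * α)) *
        Real.log ((-(qa * vb * β) + qb * va * β + lam * va) /
          (β * qb * va + α * qa * va + lam * va))) :
    (0 < (vb * lam + qa * vb * α - qb * va * α) / (vb * β * qb + vb * α * qa + lam * vb) ∧
      (vb * lam + qa * vb * α - qb * va * α) / (vb * β * qb + vb * α * qa + lam * vb) < 1) ∧
    (0 < (-(qa * vb * β) + qb * va * β + lam * va) / (β * qb * va + α * qa * va + lam * va) ∧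
      (-(qa * vb * β) + qb * va * β + lam * va) / (β * qb * va + α * qa * va + lam * va) < 1) ∧
    0 < τb ∧ 0 < τa ∧ Qb τb = 0 ∧ Qa τa = 0 :=
  linear_intensity_depletion_times_general lam α β vb va qb qa hα hβ hvb hva hqb hqa hcond1 hcond2
    Qb Qa hQb hQa τb τa hτb hτa
end
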